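/- Let G be a simple 3-vertex-connected graph with at least six vertices, and let (e, S) be a separating pair of G, where e = xy and A, B are the two components of G − e − S with x ∈ A and y ∈ B. Then every edge of G joining a vertex of S to a vertex of {x, y} is removable. -/

import Mathlib

open SimpleGraph

universe u

variable {V : Type u}

/-- Two walks with the same endpoints are internally vertex-disjoint. -/
def IntDisjoint {G : SimpleGraph V} {x y : V} (p q : G.Walk x y) : Prop :=
  ∀ v ∈ p.support, v ∈ q.support → v = x ∨ v = y

/-- There are `k` pairwise internally vertex-disjoint `x`-`y` paths in `G`. -/
def ConnK (G : SimpleGraph V) (k : ℕ) (x y : V) : Prop :=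
  ∃ P : Fin k → G.Walk x y, (∀ i, (P i).IsPath) ∧
    ∀ i j, i ≠ j → IntDisjoint (P i) (P j)

/-- `G` is `(Q,r)`-vertex-connected. -/
def QRConn (G : SimpleGraph V) (Q : Set V) (r : V → ℕ) : Prop :=
  ∀ x ∈ Q, ∀ y ∈ Q, x ≠ y → ConnK G (min (r x) (r y)) x y

/-- Delete a vertex (isolate it). -/
def delV (G : SimpleGraph V) (v : V) : SimpleGraph V where
  Adj a b := G.Adj a b ∧ a ≠ v ∧ b ≠ v
  symm := by constructor; intro a b h; exact ⟨h.1.symm, h.2.2, h.2.1⟩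
  loopless := by constructor; intro a h; exact G.loopless.irrefl a h.1

/-- `G` is minimally `(Q,r)`-vertex-connected: it is `(Q,r)`-vertex-connected but
deleting any edge or any vertex destroys this property. -/
def MinQR (G : SimpleGraph V) (Q : Set V) (r : V → ℕ) : Prop :=
  QRConn G Q r ∧ (∀ e ∈ G.edgeSet, ¬ QRConn (G.deleteEdges {e}) Q r) ∧
    ∀ v : V, ¬ QRConn (delV G v) Q r

/-- Biconnected: at least 3 vertices, connected, and no cut vertex. -/
def Biconnected (G : SimpleGraph V) : Prop :=
  3 ≤ Nat.card V ∧ G.Connected ∧ ∀ v : V, (SimpleGraph.induce {w | w ≠ v} G).Connected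

/-- Three-vertex-connected: more than 3 vertices and removing any at most 2
vertices leaves the graph connected. -/
def ThreeConnected (G : SimpleGraph V) : Prop :=
  4 ≤ Nat.card V ∧ ∀ s : Set V, s.ncard ≤ 2 → (SimpleGraph.induce sᶜ G).Connected

/-- Degree of a vertex. -/
noncomputable def vdeg (G : SimpleGraph V) (v : V) : ℕ := (G.neighborSet v).ncard

/-- The contracted version of `G`: suppress all degree-2 vertices.  Two vertices of
degree `≠ 2` are adjacent iff they are joined by a path all of whose internal
vertices have degree 2. -/
def suppress (G : SimpleGraph V) : SimpleGraph {v : V // vdeg G v ≠ 2} where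
  Adj u v := u ≠ v ∧ ∃ p : G.Walk u.1 v.1, p.IsPath ∧
      ∀ w ∈ p.support, w ≠ u.1 → w ≠ v.1 → vdeg G w = 2
  symm := by
    constructor
    rintro u v ⟨hne, p, hp, hint⟩
    refine ⟨hne.symm, p.reverse, hp.reverse, ?_⟩
    intro w hw h1 h2
    rw [SimpleGraph.Walk.support_reverse, List.mem_reverse] at hw
    exact hint w hw h2 h1
  loopless := by constructor; intro u h; exact h.1 rfl

/-- The removal operation of Holton–Jackson–Saito–Wormald: delete the edge `uv`,
suppress any resulting degree-2 vertices and simplify parallel edges; the edge is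
removable when the result is three-connected. -/
def Removable (G : SimpleGraph V) (u v : V) : Prop :=
  ThreeConnected (suppress (G.deleteEdges {s(u, v)}))

/-!
Write `H = G - ux` with `u ∈ S = {u, t}`. Suppressing degree-2 vertices keeps two vertices of
degree `≠ 2` connected whenever they are connected in `H`, so it suffices that no set `T` of at
most two vertices separates two such vertices in `H`. A walk of `G - T` survives in `H - T`
unless `T` separates `u` from `x` in `H`. If `T` contains every other neighbour of `u` (or of
`x`), that vertex has degree 2 in `H`, so it is not an end of the walk and the walk can avoid it.
Otherwise compare `T` with the separating pair `(xy, S)`. If `T` misses `B`, then `u` reaches `x`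
through a neighbour in `B` (one exists since `{t, y}` is no cut), `B` and the edge `yx`. If `T`
misses `A`, then `{x, t}` cuts `A - x` off from `u`. If `T = {a, b}` with `a ∈ A` and `b ∈ B`,
the end of `ux` that does not reach `t`, together with `a` or `b`, cuts the part of `A - x` or
`B` it reaches off from the other end.
-/

theorem Set.ncard_pair_le {α : Type*} (a b : α) : ({a, b} : Set α).ncard ≤ 2 :=
  (Set.ncard_insert_le a {b}).trans (by rw [Set.ncard_singleton])

namespace SimpleGraph

def ReachableOutside (G : SimpleGraph V) (T : Set V) (a b : V) : Prop :=
  ∃ p : G.Walk a b, ∀ w ∈ p.support, w ∉ T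

namespace ReachableOutside

variable {G : SimpleGraph V} {T : Set V} {a b c : V}

theorem left_notMem (h : G.ReachableOutside T a b) : a ∉ T :=
  h.elim fun p hp => hp a p.start_mem_support

theorem right_notMem (h : G.ReachableOutside T a b) : b ∉ T :=
  h.elim fun p hp => hp b p.end_mem_support

theorem refl (ha : a ∉ T) : G.ReachableOutside T a a :=
  ⟨.nil, by simpa using ha⟩

theorem symm (h : G.ReachableOutside T a b) : G.ReachableOutside T b a := by
  obtain ⟨p, hp⟩ := h
  exact ⟨p.reverse, fun w hw => hp w (by simpa using hw)⟩

theorem trans (h : G.ReachableOutside T a b) (h' : G.ReachableOutside T b c) :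
    G.ReachableOutside T a c := by
  obtain ⟨p, hp⟩ := h
  obtain ⟨q, hq⟩ := h'
  refine ⟨p.append q, fun w hw => ?_⟩
  rcases (Walk.mem_support_append_iff p q).mp hw with hw | hw
  exacts [hp w hw, hq w hw]

theorem of_adj (h : G.Adj a b) (ha : a ∉ T) (hb : b ∉ T) : G.ReachableOutside T a b :=
  ⟨h.toWalk, by simp [ha, hb]⟩

@[elab_as_elim]
theorem induction_on {P : V → Prop} (h : G.ReachableOutside T a b) (ha : P a)
    (step : ∀ c d, P c → G.Adj c d → c ∉ T → d ∉ T → P d) : P b := by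
  obtain ⟨p, hp⟩ := h
  induction p with
  | nil => exact ha
  | cons hcd q ih =>
    refine ih (step _ _ ha hcd (hp _ (by simp)) (hp _ (by simp))) fun w hw => hp w ?_
    simp [hw]

end ReachableOutside

theorem reachableOutside_of_connected_induce {G : SimpleGraph V} {s T : Set V}
    (hG : (G.induce s).Connected) (hsT : ∀ v ∈ s, v ∉ T) {a b : V} (ha : a ∈ s) (hb : b ∈ s) :
    G.ReachableOutside T a b := by
  obtain ⟨p⟩ := hG.preconnected ⟨a, ha⟩ ⟨b, hb⟩
  refine ⟨p.map (Embedding.induce s).toHom, fun w hw => ?_⟩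
  obtain ⟨w', -, rfl⟩ := List.mem_map.mp ((p.support_map _) ▸ hw)
  exact hsT _ w'.2

theorem reachable_induce_suppress_of_isPath {H : SimpleGraph V} {Ts : Set {v // vdeg H v ≠ 2}}
    {a b : {v // vdeg H v ≠ 2}} (ha : a ∈ Tsᶜ) (hb : b ∈ Tsᶜ) (p : H.Walk a b) (hp : p.IsPath)
    (hT : ∀ w ∈ p.support, w ∉ Subtype.val '' Ts) :
    ((suppress H).induce Tsᶜ).Reachable ⟨a, ha⟩ ⟨b, hb⟩ := by
  classical
  induction hn : p.length using Nat.strong_induction_on generalizing a b with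
  | _ n ih =>
  by_cases hmid : ∃ w ∈ p.support, w ≠ a.1 ∧ w ≠ b.1 ∧ vdeg H w ≠ 2
  · obtain ⟨w, hw, hwa, hwb, hw2⟩ := hmid
    have hwTs : (⟨w, hw2⟩ : {v // vdeg H v ≠ 2}) ∈ Tsᶜ := fun h => hT w hw ⟨_, h, rfl⟩
    exact (ih _ (hn ▸ p.length_takeUntil_lt_length hw hwb) ha hwTs (p.takeUntil w hw)
      (hp.takeUntil hw) (fun z hz => hT z (p.support_takeUntil_subset_support hw hz)) rfl).trans
      (ih _ (hn ▸ p.length_dropUntil_lt_length hw hwa) hwTs hb (p.dropUntil w hw)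
      (hp.dropUntil hw) (fun z hz => hT z (p.support_dropUntil_subset_support hw hz)) rfl)
  · push Not at hmid
    by_cases hab : a = b
    · subst hab
      rfl
    · exact Adj.reachable ⟨hab, p, hp, fun w hw h1 h2 => by_contra fun h => h (hmid w hw h1 h2)⟩

theorem threeConnected_suppress {H : SimpleGraph V} (hcard : 4 ≤ Nat.card {v // vdeg H v ≠ 2})
    (hreach : ∀ T : Set V, T.ncard ≤ 2 → ∀ a b, a ∉ T → b ∉ T → vdeg H a ≠ 2 → vdeg H b ≠ 2 →
      H.ReachableOutside T a b) :
    ThreeConnected (suppress H) := by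
  classical
  refine ⟨hcard, fun Ts hTs => ?_⟩
  have hT : (Subtype.val '' Ts).ncard ≤ 2 := by
    rwa [Set.ncard_image_of_injective _ Subtype.val_injective]
  have hval : ∀ c, c ∉ Ts → c.1 ∉ Subtype.val '' Ts :=
    fun c hc ⟨c', hc', he⟩ => hc (Subtype.ext he ▸ hc')
  have : Nonempty ↥Tsᶜ := (Set.nonempty_compl.mpr fun h => by
    rw [h, Set.ncard_univ] at hTs; omega).to_subtype
  refine ⟨fun ⟨a, ha⟩ ⟨b, hb⟩ => ?_⟩
  obtain ⟨p, hp⟩ := hreach _ hT a b (hval a ha) (hval b hb) a.2 b.2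
  exact reachable_induce_suppress_of_isPath ha hb p.bypass p.bypass_isPath
    fun w hw => hp w (p.support_bypass_subset_support hw)

section DeleteEdge

variable {G : SimpleGraph V} {u x a b c d : V} {T : Set V}

theorem deleteEdges_adj_of_ne (h : G.Adj c d) (hu : c ≠ u) (hx : c ≠ x) :
    (G.deleteEdges {s(u, x)}).Adj c d :=
  deleteEdges_adj.mpr ⟨h, by simp [hu, hx]⟩

theorem induce_deleteEdges_of_notMem {s : Set V} (hu : u ∉ s) :
    (G.deleteEdges {s(u, x)}).induce s = G.induce s := by
  ext ⟨a, ha⟩ ⟨b, hb⟩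
  simp only [comap_adj, Function.Embedding.coe_subtype, deleteEdges_adj, Set.mem_singleton_iff,
    Sym2.eq_iff]
  refine ⟨fun h => h.1, fun h => ⟨h, ?_⟩⟩
  rintro (⟨rfl, -⟩ | ⟨-, rfl⟩)
  exacts [hu ha, hu hb]

theorem vdeg_deleteEdges_of_ne (hu : c ≠ u) (hx : c ≠ x) :
    vdeg (G.deleteEdges {s(u, x)}) c = vdeg G c := by
  unfold vdeg
  congr 1
  ext z
  exact ⟨fun h => h.1, fun h => deleteEdges_adj_of_ne h hu hx⟩

theorem vdeg_deleteEdges_add_one [Finite V] (h : G.Adj u x) :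
    vdeg (G.deleteEdges {s(u, x)}) u + 1 = vdeg G u := by
  have : (G.deleteEdges {s(u, x)}).neighborSet u = G.neighborSet u \ {x} := by
    ext z
    simp [h.ne]
  rw [vdeg, vdeg, this, Set.ncard_sdiff_singleton_add_one ((G.mem_neighborSet u x).mpr h)]

namespace ReachableOutside

theorem deleteEdges_of_reachableOutside
    (hux : u ∉ T → x ∉ T → (G.deleteEdges {s(u, x)}).ReachableOutside T u x)
    (h : G.ReachableOutside T a b) : (G.deleteEdges {s(u, x)}).ReachableOutside T a b := by
  refine h.induction_on (refl h.left_notMem) fun c d hc hcd hcT hdT => hc.trans ?_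
  by_cases he : s(c, d) = s(u, x)
  · rcases Sym2.eq_iff.mp he with ⟨rfl, rfl⟩ | ⟨rfl, rfl⟩
    exacts [hux hcT hdT, (hux hdT hcT).symm]
  · exact .of_adj (deleteEdges_adj.mpr ⟨hcd, he⟩) hcT hdT

/-- A walk avoiding `T` can only pass through `u` as `x u x`, so it never needs the edge `ux`. -/
theorem deleteEdges_of_neighborSet_subset
    (hN : (G.deleteEdges {s(u, x)}).neighborSet u ⊆ T) (ha : a ≠ u) (hb : b ≠ u)
    (h : G.ReachableOutside T a b) : (G.deleteEdges {s(u, x)}).ReachableOutside T a b := by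
  have hx : ∀ z, G.Adj u z → z ∉ T → z = x := fun z hz hzT => by
    by_contra hzx
    exact hzT (hN (deleteEdges_adj.mpr ⟨hz, by simp [hzx, hz.ne.symm]⟩))
  suffices (b ≠ u → (G.deleteEdges {s(u, x)}).ReachableOutside T a b) ∧
      (b = u → (G.deleteEdges {s(u, x)}).ReachableOutside T a x) from this.1 hb
  refine h.induction_on ⟨fun _ => refl h.left_notMem, fun h => absurd h ha⟩
    fun c d ⟨hc, hcu⟩ hcd hcT hdT => ⟨fun hdu => ?_, ?_⟩
  · by_cases hcu' : c = u
    · subst hcu'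
      exact hx d hcd hdT ▸ hcu rfl
    · exact (hc hcu').trans
        (.of_adj (deleteEdges_adj.mpr ⟨hcd, by simp [hcu', hdu]⟩) hcT hdT)
  · rintro rfl
    obtain rfl := hx c hcd.symm hcT
    exact hc hcd.ne

end ReachableOutside

end DeleteEdge

end SimpleGraph

namespace ThreeConnected

variable {G : SimpleGraph V} {u x : V}

theorem finite (h3 : ThreeConnected G) : Finite V :=
  Nat.finite_of_card_ne_zero (by have := h3.1; omega)

theorem reachableOutside (h3 : ThreeConnected G) {T : Set V} (hT : T.ncard ≤ 2) {a b : V}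
    (ha : a ∉ T) (hb : b ∉ T) : G.ReachableOutside T a b :=
  reachableOutside_of_connected_induce (h3.2 T hT) (fun _ h => h) ha hb

theorem mem_of_closed (h3 : ThreeConnected G) {C W : Set V} (hC : C.ncard ≤ 2) {w v : V}
    (hw : w ∈ W) (hwC : w ∉ C) (hvC : v ∉ C)
    (hW : ∀ a ∈ W, ∀ b, G.Adj a b → b ∈ W ∨ b ∈ C) : v ∈ W :=
  (h3.reachableOutside hC hwC hvC).induction_on hw fun c d hc hcd _ hd =>
    (hW c hc d hcd).resolve_right hd

theorem three_le_vdeg (h3 : ThreeConnected G) (v : V) : 3 ≤ vdeg G v := by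
  have := h3.finite
  by_contra! h
  have hall : ∀ w, w ∈ insert v (G.neighborSet v) := by
    intro w
    by_contra hw
    rw [Set.mem_insert_iff, not_or] at hw
    refine hw.1 (h3.mem_of_closed (W := {v}) (C := G.neighborSet v) (by unfold vdeg at h; omega)
      rfl (G.notMem_neighborSet_self) hw.2 ?_)
    rintro a rfl b hab
    exact Or.inr hab
  have := Set.ncard_insert_le v (G.neighborSet v)
  rw [Set.eq_univ_of_forall hall, Set.ncard_univ] at this
  have := h3.1
  unfold vdeg at h
  omega

theorem reachableOutside_deleteEdges_of_neighborSet_subset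
    (h3 : ThreeConnected G) (hux : G.Adj u x) {T : Set V} (hT : T.ncard ≤ 2)
    (hN : (G.deleteEdges {s(u, x)}).neighborSet u ⊆ T) {a b : V}
    (ha : vdeg (G.deleteEdges {s(u, x)}) a ≠ 2) (hb : vdeg (G.deleteEdges {s(u, x)}) b ≠ 2)
    (haT : a ∉ T) (hbT : b ∉ T) : (G.deleteEdges {s(u, x)}).ReachableOutside T a b := by
  have := h3.finite
  have hu : vdeg (G.deleteEdges {s(u, x)}) u = 2 := by
    have := vdeg_deleteEdges_add_one hux
    have := h3.three_le_vdeg u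
    have : vdeg (G.deleteEdges {s(u, x)}) u ≤ 2 := (Set.ncard_le_ncard hN).trans hT
    omega
  exact (h3.reachableOutside hT haT hbT).deleteEdges_of_neighborSet_subset hN
    (fun h => ha (h ▸ hu)) (fun h => hb (h ▸ hu))

theorem removable_of_reachableOutside (h3 : ThreeConnected G)
    (hcard : 6 ≤ Nat.card V) (hux : G.Adj u x)
    (hsep : ∀ T : Set V, T.ncard ≤ 2 → u ∉ T → x ∉ T →
      ¬ (G.deleteEdges {s(u, x)}).neighborSet u ⊆ T →
      ¬ (G.deleteEdges {s(u, x)}).neighborSet x ⊆ T →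
      (G.deleteEdges {s(u, x)}).ReachableOutside T u x) :
    Removable G u x := by
  have := h3.finite
  refine threeConnected_suppress ?_ fun T hT a b haT hbT ha hb => ?_
  · have hpair := Set.ncard_insert_le u {x}
    have hcompl := Set.ncard_add_ncard_compl ({u, x} : Set V)
    rw [Set.ncard_singleton] at hpair
    calc 4 ≤ ({u, x}ᶜ : Set V).ncard := by omega
      _ ≤ {v | vdeg (G.deleteEdges {s(u, x)}) v ≠ 2}.ncard := Set.ncard_le_ncard fun v hv => by
        simp only [Set.mem_compl_iff, Set.mem_insert_iff, Set.mem_singleton_iff, not_or] at hv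
        have := h3.three_le_vdeg v
        show vdeg _ v ≠ 2
        rw [vdeg_deleteEdges_of_ne hv.1 hv.2]
        omega
      _ = _ := Nat.card_coe_set_eq _ |>.symm
  by_cases hu : (G.deleteEdges {s(u, x)}).neighborSet u ⊆ T
  · exact h3.reachableOutside_deleteEdges_of_neighborSet_subset hux hT hu ha hb haT hbT
  by_cases hx : (G.deleteEdges {s(u, x)}).neighborSet x ⊆ T
  · rw [Sym2.eq_swap] at hx ha hb ⊢
    exact h3.reachableOutside_deleteEdges_of_neighborSet_subset hux.symm hT hx ha hb haT hbT
  exact (h3.reachableOutside hT haT hbT).deleteEdges_of_reachableOutside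
    fun huT hxT => hsep T hT huT hxT hu hx

end ThreeConnected

namespace SimpleGraph

/-- `r` is the end of `ux` that does not reach `t` in `H - T`, and `r'` is the other end. -/
theorem exists_end_of_not_reachableOutside {H : SimpleGraph V} {T : Set V} {u x t : V}
    (hux : ¬ H.ReachableOutside T u x) (huT : u ∉ T) (hxT : x ∉ T)
    (hNu : ¬ H.neighborSet u ⊆ T) (hNx : ¬ H.neighborSet x ⊆ T) :
    ∃ r r', (r = u ∧ r' = x ∨ r = x ∧ r' = u) ∧
      (∀ s ∈ ({u, t} : Set V), H.ReachableOutside T r s → s = r) ∧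
      ∃ z, H.ReachableOutside T r z ∧ z ≠ x ∧ z ∉ ({u, t} : Set V) := by
  by_cases hut : H.ReachableOutside T u t
  · obtain ⟨z, hz : H.Adj x z, hzT⟩ := Set.not_subset.mp hNx
    have hxz : H.ReachableOutside T x z := .of_adj hz hxT hzT
    refine ⟨x, u, Or.inr ⟨rfl, rfl⟩, ?_, z, hxz, hz.ne.symm, ?_⟩
    · rintro s (rfl | rfl) hs
      exacts [(hux hs.symm).elim, (hux (hut.trans hs.symm)).elim]
    · rintro (rfl | rfl)
      exacts [hux hxz.symm, hux (hut.trans hxz.symm)]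
  · obtain ⟨z, hz : H.Adj u z, hzT⟩ := Set.not_subset.mp hNu
    have huz : H.ReachableOutside T u z := .of_adj hz huT hzT
    refine ⟨u, x, Or.inl ⟨rfl, rfl⟩, ?_, z, huz, fun h => hux (h ▸ huz), ?_⟩
    · rintro s (rfl | rfl) hs
      exacts [rfl, (hut hs).elim]
    · rintro (rfl | rfl)
      exacts [hz.ne rfl, hut huz]

/-- `(xy, S)` is a separating pair of `G`, and `A ∋ x`, `B ∋ y` are the two components of
`G - xy - S`. -/
structure IsSeparatingPair (G : SimpleGraph V) (x y : V) (S A B : Set V) : Prop where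
  adj : G.Adj x y
  ncard_eq_two : S.ncard = 2
  disjoint : Disjoint A B
  union_eq_compl : A ∪ B = Sᶜ
  two_le_ncard_left : 2 ≤ A.ncard
  two_le_ncard_right : 2 ≤ B.ncard
  connected_left : (induce A (G.deleteEdges {s(x, y)})).Connected
  connected_right : (induce B (G.deleteEdges {s(x, y)})).Connected
  not_adj : ∀ a ∈ A, ∀ b ∈ B, ¬ (G.deleteEdges {s(x, y)}).Adj a b
  left_mem : x ∈ A
  right_mem : y ∈ B

namespace IsSeparatingPair

variable {G : SimpleGraph V} {x y u a b : V} {S A B T : Set V}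

theorem symm (hsp : IsSeparatingPair G x y S A B) : IsSeparatingPair G y x S B A := by
  have e : s(y, x) = s(x, y) := Sym2.eq_swap
  exact ⟨hsp.adj.symm, hsp.ncard_eq_two, hsp.disjoint.symm,
    Set.union_comm B A ▸ hsp.union_eq_compl, hsp.two_le_ncard_right, hsp.two_le_ncard_left,
    e ▸ hsp.connected_right, e ▸ hsp.connected_left,
    fun b hb a ha h => hsp.not_adj a ha b hb (e ▸ h.symm), hsp.right_mem, hsp.left_mem⟩

theorem notMem_of_mem_left (hsp : IsSeparatingPair G x y S A B) (ha : a ∈ A) : a ∉ S :=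
  hsp.union_eq_compl.subset (Or.inl ha)

theorem notMem_of_mem_right (hsp : IsSeparatingPair G x y S A B) (hb : b ∈ B) : b ∉ S :=
  hsp.union_eq_compl.subset (Or.inr hb)

theorem mem_or_mem_or_mem (hsp : IsSeparatingPair G x y S A B) (v : V) :
    v ∈ S ∨ v ∈ A ∨ v ∈ B := by
  by_cases hv : v ∈ S
  · exact Or.inl hv
  · exact Or.inr (hsp.union_eq_compl.superset hv)

theorem exists_eq_pair (hsp : IsSeparatingPair G x y S A B) (hu : u ∈ S) :
    ∃ t, t ≠ u ∧ S = {u, t} := by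
  obtain ⟨c, d, hcd, rfl⟩ := Set.ncard_eq_two.mp hsp.ncard_eq_two
  rcases hu with rfl | rfl
  exacts [⟨d, hcd.symm, rfl⟩, ⟨c, hcd, Set.pair_comm _ _⟩]

theorem eq_of_adj (hsp : IsSeparatingPair G x y S A B) (ha : a ∈ A) (hb : b ∈ B)
    (h : G.Adj a b) : a = x ∧ b = y := by
  have he : s(a, b) = s(x, y) := by
    by_contra he
    exact hsp.not_adj a ha b hb (deleteEdges_adj.mpr ⟨h, he⟩)
  rcases Sym2.eq_iff.mp he with hxy | ⟨rfl, -⟩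
  exacts [hxy, (Set.disjoint_left.mp hsp.disjoint ha hsp.right_mem).elim]

theorem mem_or_mem_or_eq_of_adj (hsp : IsSeparatingPair G x y S A B) {X : Set V}
    (hX : X = A ∨ X = B) {w z : V} (hw : w ∈ X) (hwx : w ≠ x) (h : G.Adj w z) :
    z ∈ X ∨ z ∈ S ∨ z = x := by
  rcases hsp.mem_or_mem_or_mem z with hz | hz | hz
  · exact Or.inr (Or.inl hz)
  · rcases hX with rfl | rfl
    exacts [Or.inl hz, Or.inr (Or.inr (hsp.eq_of_adj hz hw h.symm).1)]
  · rcases hX with rfl | rfl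
    exacts [(hwx (hsp.eq_of_adj hw hz h).1).elim, Or.inl hz]

theorem six_le_card [Finite V] (hsp : IsSeparatingPair G x y S A B) : 6 ≤ Nat.card V := by
  have := Set.ncard_add_ncard_compl S
  rw [← hsp.union_eq_compl, Set.ncard_union_eq hsp.disjoint] at this
  have := hsp.ncard_eq_two
  have := hsp.two_le_ncard_left
  have := hsp.two_le_ncard_right
  omega

theorem connected_induce_left (hsp : IsSeparatingPair G x y S A B) : (G.induce A).Connected := by
  have := hsp.connected_left
  rwa [Sym2.eq_swap, induce_deleteEdges_of_notMem
    (Set.disjoint_right.mp hsp.disjoint hsp.right_mem)] at this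

theorem connected_induce_right (hsp : IsSeparatingPair G x y S A B) :
    (G.induce B).Connected := by
  have := hsp.connected_right
  rwa [induce_deleteEdges_of_notMem (Set.disjoint_left.mp hsp.disjoint hsp.left_mem)] at this

theorem exists_adj_right (hsp : IsSeparatingPair G x y S A B) (h3 : ThreeConnected G)
    (hu : u ∈ S) : ∃ b ∈ B, G.Adj u b := by
  by_contra! hno
  obtain ⟨t, -, rfl⟩ := hsp.exists_eq_pair hu
  obtain ⟨w, hwB, hwy⟩ := Set.exists_ne_of_one_lt_ncard hsp.two_le_ncard_right y
  have hx := h3.mem_of_closed (W := B \ {y}) (C := {t, y}) (Set.ncard_pair_le t y) ⟨hwB, hwy⟩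
    (v := x) ?_ ?_ ?_
  · exact Set.disjoint_left.mp hsp.disjoint hsp.left_mem hx.1
  · rintro (rfl | rfl)
    exacts [hsp.notMem_of_mem_right hwB (by simp), hwy rfl]
  · rintro (rfl | rfl)
    exacts [hsp.notMem_of_mem_left hsp.left_mem (by simp), hsp.adj.ne rfl]
  · rintro c ⟨hcB, hcy⟩ d hcd
    rcases hsp.mem_or_mem_or_mem d with (rfl | rfl) | hd | hd
    · exact (hno c hcB hcd.symm).elim
    · exact Or.inr (Or.inl rfl)
    · exact (hcy (hsp.eq_of_adj hd hcB hcd.symm).2).elim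
    · by_cases hdy : d = y
      exacts [Or.inr (Or.inr hdy), Or.inl ⟨hd, hdy⟩]

/-- Otherwise `{r, c}` would separate the vertices of `X - x` reached from `r` in
`G - ux - T` from the other end `r'` of `ux`. -/
theorem reachableOutside_deleteEdges_of_cover (hsp : IsSeparatingPair G x y S A B)
    (h3 : ThreeConnected G) (hu : u ∈ S) {r r' c w : V} {X : Set V}
    (hr : r = u ∧ r' = x ∨ r = x ∧ r' = u) (hX : X = A ∨ X = B) (hc : c ∈ T ∨ c ∈ S)
    (hr'c : r' ≠ c) (hTc : ∀ z ∈ T, z ∈ X ∨ z ∈ S ∨ z = x → z = c)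
    (hSc : ∀ s ∈ S, (G.deleteEdges {s(u, x)}).ReachableOutside T r s → s = r ∨ s = c)
    (hw : w ∈ X) (hwx : w ≠ x) (hwr : (G.deleteEdges {s(u, x)}).ReachableOutside T r w) :
    (G.deleteEdges {s(u, x)}).ReachableOutside T u x := by
  by_contra hns
  have hXS : ∀ v ∈ X, v ∉ S := by
    rcases hX with rfl | rfl
    exacts [fun _ => hsp.notMem_of_mem_left, fun _ => hsp.notMem_of_mem_right]
  have hxr : (G.deleteEdges {s(u, x)}).ReachableOutside T r x → r = x := by
    rcases hr with ⟨rfl, -⟩ | ⟨rfl, -⟩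
    exacts [fun h => (hns h).elim, fun _ => rfl]
  have hux : u ≠ x := fun h => hsp.notMem_of_mem_left hsp.left_mem (h ▸ hu)
  have hr' := h3.mem_of_closed (W := {v | v ∈ X ∧ v ≠ x ∧
    (G.deleteEdges {s(u, x)}).ReachableOutside T r v}) (C := {r, c}) (Set.ncard_pair_le r c)
    (v := r') ⟨hw, hwx, hwr⟩ ?_ ?_ ?_
  · rcases hr with ⟨-, rfl⟩ | ⟨-, rfl⟩
    exacts [hr'.2.1 rfl, hXS _ hr'.1 hu]
  · rintro (rfl | rfl)
    · rcases hr with ⟨rfl, -⟩ | ⟨rfl, -⟩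
      exacts [hXS _ hw hu, hwx rfl]
    · rcases hc with hc | hc
      exacts [hwr.right_notMem hc, hXS _ hw hc]
  · rintro (h | h)
    · rcases hr with ⟨rfl, rfl⟩ | ⟨rfl, rfl⟩
      exacts [hux h.symm, hux h]
    · exact hr'c h
  · rintro a ⟨ha, hax, har⟩ z haz
    have hz := hsp.mem_or_mem_or_eq_of_adj hX ha hax haz
    by_cases hzT : z ∈ T
    · exact Or.inr (Or.inr (hTc z hzT hz))
    have hrz : (G.deleteEdges {s(u, x)}).ReachableOutside T r z :=
      har.trans (.of_adj (deleteEdges_adj_of_ne haz (fun h => hXS _ ha (h ▸ hu)) hax)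
        har.right_notMem hzT)
    rcases hz with hz | hz | rfl
    · by_cases hzx : z = x
      · exact Or.inr (Or.inl (hzx.trans (hxr (hzx ▸ hrz)).symm))
      · exact Or.inl ⟨hz, hzx, hrz⟩
    · exact Or.inr (hSc z hz hrz)
    · exact Or.inr (Or.inl (hxr hrz).symm)

theorem reachableOutside_deleteEdges_of_disjoint_left (hsp : IsSeparatingPair G x y S A B)
    (h3 : ThreeConnected G) (hu : u ∈ S) (huT : u ∉ T) (hxT : x ∉ T) (hAT : ∀ a ∈ A, a ∉ T) :
    (G.deleteEdges {s(u, x)}).ReachableOutside T u x := by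
  obtain ⟨t, htu, rfl⟩ := hsp.exists_eq_pair hu
  obtain ⟨w, hwA, hwx⟩ := Set.exists_ne_of_one_lt_ncard hsp.two_le_ncard_left x
  have hAH : ((G.deleteEdges {s(u, x)}).induce A).Connected := by
    rw [induce_deleteEdges_of_notMem fun h => hsp.notMem_of_mem_left h hu]
    exact hsp.connected_induce_left
  by_contra hns
  refine hns (hsp.reachableOutside_deleteEdges_of_cover h3 hu (r := x) (r' := u) (c := t)
    (Or.inr ⟨rfl, rfl⟩) (Or.inl rfl) (Or.inr (by simp)) htu.symm ?_ ?_ hwA hwx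
    (reachableOutside_of_connected_induce hAH hAT hsp.left_mem hwA))
  · rintro z hzT (hz | (rfl | rfl) | rfl)
    exacts [(hAT z hz hzT).elim, (huT hzT).elim, rfl, (hxT hzT).elim]
  · rintro s (rfl | rfl) hs
    exacts [(hns hs.symm).elim, Or.inr rfl]

theorem reachableOutside_deleteEdges_of_disjoint_right (hsp : IsSeparatingPair G x y S A B)
    (h3 : ThreeConnected G) (hu : u ∈ S) (huT : u ∉ T) (hxT : x ∉ T) (hBT : ∀ b ∈ B, b ∉ T) :
    (G.deleteEdges {s(u, x)}).ReachableOutside T u x := by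
  obtain ⟨b, hb, hub⟩ := hsp.exists_adj_right h3 hu
  have hxB : x ∉ B := Set.disjoint_left.mp hsp.disjoint hsp.left_mem
  have hBH : ((G.deleteEdges {s(u, x)}).induce B).Connected := by
    rw [induce_deleteEdges_of_notMem fun h => hsp.notMem_of_mem_right h hu]
    exact hsp.connected_induce_right
  have hbu : (G.deleteEdges {s(u, x)}).Adj b u :=
    deleteEdges_adj_of_ne hub.symm (fun h => hsp.notMem_of_mem_right hb (h ▸ hu))
      fun h => hxB (h ▸ hb)
  have hyx : (G.deleteEdges {s(u, x)}).Adj y x :=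
    deleteEdges_adj_of_ne hsp.adj.symm (fun h => hsp.notMem_of_mem_right hsp.right_mem (h ▸ hu))
      hsp.adj.ne.symm
  exact (ReachableOutside.of_adj hbu (hBT b hb) huT).symm.trans
    ((reachableOutside_of_connected_induce hBH hBT hb hsp.right_mem).trans
      (.of_adj hyx (hBT y hsp.right_mem) hxT))

theorem exists_mem_pair_eq_of_mem_side (hsp : IsSeparatingPair G x y S A B) (ha : a ∈ A)
    (hb : b ∈ B) (hxT : x ∉ ({a, b} : Set V)) {X : Set V} (hX : X = A ∨ X = B) :
    ∃ c ∈ ({a, b} : Set V), ∀ z ∈ ({a, b} : Set V), z ∈ X ∨ z ∈ S ∨ z = x → z = c := by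
  have hSa := hsp.notMem_of_mem_left ha
  have hSb := hsp.notMem_of_mem_right hb
  rcases hX with rfl | rfl
  · refine ⟨a, Or.inl rfl, ?_⟩
    rintro z (rfl | rfl) (hz | hz | rfl)
    exacts [rfl, rfl, rfl, (Set.disjoint_right.mp hsp.disjoint hb hz).elim, (hSb hz).elim,
      (hxT (Or.inr rfl)).elim]
  · refine ⟨b, Or.inr rfl, ?_⟩
    rintro z (rfl | rfl) (hz | hz | rfl)
    exacts [(Set.disjoint_left.mp hsp.disjoint ha hz).elim, (hSa hz).elim,
      (hxT (Or.inl rfl)).elim, rfl, rfl, rfl]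

theorem reachableOutside_deleteEdges_of_mem (hsp : IsSeparatingPair G x y S A B)
    (h3 : ThreeConnected G) (hu : u ∈ S) (hT : T.ncard ≤ 2) (huT : u ∉ T) (hxT : x ∉ T)
    (hNu : ¬ (G.deleteEdges {s(u, x)}).neighborSet u ⊆ T)
    (hNx : ¬ (G.deleteEdges {s(u, x)}).neighborSet x ⊆ T)
    (ha : a ∈ A) (haT : a ∈ T) (hb : b ∈ B) (hbT : b ∈ T) :
    (G.deleteEdges {s(u, x)}).ReachableOutside T u x := by
  have := h3.finite
  obtain ⟨t, -, rfl⟩ := hsp.exists_eq_pair hu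
  have hab : a ≠ b := fun h => Set.disjoint_left.mp hsp.disjoint ha (h ▸ hb)
  obtain rfl : T = {a, b} := (Set.eq_of_subset_of_ncard_le
    (by rintro z (rfl | rfl); exacts [haT, hbT]) (by rwa [Set.ncard_pair hab])).symm
  by_contra hns
  obtain ⟨r, r', hr, hrS, z, hzr, hzx, hzS⟩ :=
    exists_end_of_not_reachableOutside (t := t) hns huT hxT hNu hNx
  obtain ⟨X, hX, hzX⟩ : ∃ X, (X = A ∨ X = B) ∧ z ∈ X := by
    rcases hsp.mem_or_mem_or_mem z with hz | hz | hz
    exacts [(hzS hz).elim, ⟨A, Or.inl rfl, hz⟩, ⟨B, Or.inr rfl, hz⟩]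
  obtain ⟨c, hcT, hc⟩ := hsp.exists_mem_pair_eq_of_mem_side ha hb hxT hX
  have hr' : r' ∉ ({a, b} : Set V) := by
    rcases hr with ⟨-, rfl⟩ | ⟨-, rfl⟩
    exacts [hxT, huT]
  exact hns (hsp.reachableOutside_deleteEdges_of_cover h3 hu hr hX (Or.inl hcT)
    (fun h => hr' (h ▸ hcT)) hc (fun s hs h => Or.inl (hrS s hs h)) hzX hzx hzr)

theorem reachableOutside_deleteEdges (hsp : IsSeparatingPair G x y S A B)
    (h3 : ThreeConnected G) (hu : u ∈ S) (hT : T.ncard ≤ 2) (huT : u ∉ T) (hxT : x ∉ T)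
    (hNu : ¬ (G.deleteEdges {s(u, x)}).neighborSet u ⊆ T)
    (hNx : ¬ (G.deleteEdges {s(u, x)}).neighborSet x ⊆ T) :
    (G.deleteEdges {s(u, x)}).ReachableOutside T u x := by
  by_cases hA : ∃ a ∈ A, a ∈ T
  · by_cases hB : ∃ b ∈ B, b ∈ T
    · obtain ⟨a, ha, haT⟩ := hA
      obtain ⟨b, hb, hbT⟩ := hB
      exact hsp.reachableOutside_deleteEdges_of_mem h3 hu hT huT hxT hNu hNx ha haT hb hbT
    · push Not at hB
      exact hsp.reachableOutside_deleteEdges_of_disjoint_right h3 hu huT hxT hB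
  · push Not at hA
    exact hsp.reachableOutside_deleteEdges_of_disjoint_left h3 hu huT hxT hA

theorem removable (hsp : IsSeparatingPair G x y S A B) (h3 : ThreeConnected G) (hu : u ∈ S)
    (hux : G.Adj u x) : Removable G u x :=
  have := h3.finite
  h3.removable_of_reachableOutside hsp.six_le_card hux
    fun _ hT huT hxT hNu hNx => hsp.reachableOutside_deleteEdges h3 hu hT huT hxT hNu hNx

end IsSeparatingPair

end SimpleGraph

theorem stmt_7_general (G : SimpleGraph V) (h3 : ThreeConnected G)
    (x y : V) (he : G.Adj x y)
    (S A B : Set V) (hS : S.ncard = 2) (hAB : Disjoint A B) (hcover : A ∪ B = Sᶜ)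
    (hA2 : 2 ≤ A.ncard) (hB2 : 2 ≤ B.ncard)
    (hAconn : (SimpleGraph.induce A (G.deleteEdges {s(x, y)})).Connected)
    (hBconn : (SimpleGraph.induce B (G.deleteEdges {s(x, y)})).Connected)
    (hnoadj : ∀ a ∈ A, ∀ b ∈ B, ¬ (G.deleteEdges {s(x, y)}).Adj a b)
    (hx : x ∈ A) (hy : y ∈ B) :
    ∀ s ∈ S, ∀ z ∈ ({x, y} : Set V), G.Adj s z → Removable G s z := by
  have hsp : IsSeparatingPair G x y S A B :=
    ⟨he, hS, hAB, hcover, hA2, hB2, hAconn, hBconn, hnoadj, hx, hy⟩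
  rintro s hs z (rfl | rfl) hsz
  exacts [hsp.removable h3 hs hsz, hsp.symm.removable h3 hs hsz]

/-- Holton–Jackson–Saito–Wormald, Theorem 2: if `(e, S)` is a
separating pair of a simple triconnected graph of order at least six, with
`e = xy`, `x ∈ A`, `y ∈ B` the two components of `G - e - S`, then every edge
joining `S` and `{x, y}` is removable. -/
theorem stmt_7 (G : SimpleGraph V) (h3 : ThreeConnected G)
    (hcard : 6 ≤ Nat.card V) (x y : V) (he : G.Adj x y)
    (S A B : Set V) (hS : S.ncard = 2) (hAB : Disjoint A B) (hcover : A ∪ B = Sᶜ)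
    (hA2 : 2 ≤ A.ncard) (hB2 : 2 ≤ B.ncard)
    (hAconn : (SimpleGraph.induce A (G.deleteEdges {s(x, y)})).Connected)
    (hBconn : (SimpleGraph.induce B (G.deleteEdges {s(x, y)})).Connected)
    (hnoadj : ∀ a ∈ A, ∀ b ∈ B, ¬ (G.deleteEdges {s(x, y)}).Adj a b)
    (hx : x ∈ A) (hy : y ∈ B) :
    ∀ s ∈ S, ∀ z ∈ ({x, y} : Set V), G.Adj s z → Removable G s z :=
  stmt_7_general G h3 x y he S A B hS hAB hcover hA2 hB2 hAconn hBconn hnoadj hx hy
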